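/- arXiv:1306.3772 — 4 statements merged into one kernel-verified Lean document; each statement's English description precedes it below -/
import Mathlib

section
/- For every w ∈ ℕ and every finite set S of binary strings, all of length exactly w, with |S| ≥ 2, there exists a binary string p such that 3·|S_⊑p| ≥ |S|, 3·|S_⊑p| ≤ 2·|S|, 3·|S_¬⊑p| ≥ |S|, and 3·|S_¬⊑p| ≤ 2·|S|. -/
/-!
Walk down the binary trie of `S` from the root, always stepping to the heavier child. The heavier
child carries at least half of its parent's strings, so as long as the current prefix carries more
than `2|S|/3` strings its heavier child still carries more than `|S|/3`. A prefix of full length `w`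
carries at most one string, which is below `2|S|/3` once `|S| ≥ 2`; hence the walk first lands in
`[|S|/3, 2|S|/3]`, and then so does the complement.
-/

open Finset

namespace List

variable {α : Type*}

theorem prefix_iff_exists_append_singleton_prefix {p x : List α} (h : p.length < x.length) :
    p <+: x ↔ ∃ a, p ++ [a] <+: x := by
  constructor
  · rintro ⟨_ | ⟨a, t⟩, rfl⟩
    · simp at h
    · exact ⟨a, t, by simp⟩
  · rintro ⟨a, ha⟩
    exact (prefix_append p [a]).trans ha

theorem eq_of_append_singleton_prefix {p x : List α} {a b : α} (ha : p ++ [a] <+: x)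
    (hb : p ++ [b] <+: x) : a = b := by
  simpa using (prefix_of_prefix_length_le ha hb (by simp)).eq_of_length (by simp)

end List

section PrefixCount

variable {α : Type*} [DecidableEq α]

theorem card_filter_prefix_le_one (S : Finset (List α)) (p : List α)
    (hlen : ∀ x ∈ S, x.length = p.length) : #{x ∈ S | p <+: x} ≤ 1 := by
  refine card_le_one.2 fun x hx y hy => ?_
  rw [mem_filter] at hx hy
  rw [← hx.2.eq_of_length (hlen x hx.1).symm, ← hy.2.eq_of_length (hlen y hy.1).symm]

theorem card_filter_prefix_eq_sum [Fintype α] (S : Finset (List α)) (p : List α)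
    (hlen : ∀ x ∈ S, p.length < x.length) :
    #{x ∈ S | p <+: x} = ∑ a, #{x ∈ S | p ++ [a] <+: x} := by
  rw [← card_biUnion (s := univ) (t := fun a => {x ∈ S | p ++ [a] <+: x}) fun a _ b _ hab =>
    disjoint_filter.2 fun x _ ha hb => hab (List.eq_of_append_singleton_prefix ha hb)]
  congr 1
  ext x
  simp only [mem_filter, mem_biUnion, mem_univ, true_and]
  constructor
  · rintro ⟨hx, hpx⟩
    obtain ⟨a, ha⟩ := (List.prefix_iff_exists_append_singleton_prefix (hlen x hx)).1 hpx
    exact ⟨a, hx, ha⟩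
  · rintro ⟨a, hx, ha⟩
    exact ⟨hx, (List.prefix_append p [a]).trans ha⟩

end PrefixCount

theorem exists_le_two_mul_card_filter_append_singleton_prefix (S : Finset (List Bool))
    (p : List Bool) (hlen : ∀ x ∈ S, p.length < x.length) :
    ∃ b : Bool, #{x ∈ S | p <+: x} ≤ 2 * #{x ∈ S | p ++ [b] <+: x} := by
  rw [card_filter_prefix_eq_sum S p hlen, Fintype.sum_bool]
  by_cases h : #{x ∈ S | p ++ [true] <+: x} ≤ #{x ∈ S | p ++ [false] <+: x}
  · exact ⟨false, by omega⟩
  · exact ⟨true, by omega⟩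

theorem exists_prefix_third_le_card_filter_le_two_thirds {w : ℕ} {S : Finset (List Bool)}
    (hlen : ∀ x ∈ S, x.length = w) (hS : 2 ≤ #S) (p : List Bool) (hp : p.length ≤ w)
    (hbig : 2 * #S < 3 * #{x ∈ S | p <+: x}) :
    ∃ q : List Bool, #S ≤ 3 * #{x ∈ S | q <+: x} ∧ 3 * #{x ∈ S | q <+: x} ≤ 2 * #S := by
  rcases hp.lt_or_eq with hp | rfl
  · obtain ⟨b, hb⟩ := exists_le_two_mul_card_filter_append_singleton_prefix S p
      fun x hx => hlen x hx ▸ hp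
    by_cases hle : 3 * #{x ∈ S | p ++ [b] <+: x} ≤ 2 * #S
    · exact ⟨p ++ [b], by omega, hle⟩
    · exact exists_prefix_third_le_card_filter_le_two_thirds hlen hS (p ++ [b])
        (by simpa using hp) (by omega)
  · have := card_filter_prefix_le_one S p hlen
    omega
termination_by w - p.length

/-- **Prefix partitioning.** Every set of at least two equal-length binary strings
can be split by some prefix `p` into two parts each of size between `|S|/3` and `2|S|/3`. -/
theorem prefix_partitioning (w : ℕ) (S : Finset (List Bool))
    (hlen : ∀ x ∈ S, x.length = w) (hS : 2 ≤ S.card) :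
    ∃ p : List Bool,
      S.card ≤ 3 * (S.filter (fun x => p <+: x)).card ∧
      3 * (S.filter (fun x => p <+: x)).card ≤ 2 * S.card ∧
      S.card ≤ 3 * (S.filter (fun x => ¬ (p <+: x))).card ∧
      3 * (S.filter (fun x => ¬ (p <+: x))).card ≤ 2 * S.card := by
  have hroot : #{x ∈ S | [] <+: x} = #S := by
    rw [filter_true_of_mem fun x _ => List.nil_prefix]
  obtain ⟨q, hq_ge, hq_le⟩ :=
    exists_prefix_third_le_card_filter_le_two_thirds hlen hS [] (Nat.zero_le w) (by omega)
  have hcompl := card_filter_add_card_filter_not (s := S) (p := fun x => q <+: x)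
  exact ⟨q, hq_ge, hq_le, by omega, by omega⟩
end

section
/- Let w, m ∈ ℕ with m ≤ w, let S be a finite nonempty set of natural numbers all less than 2^w, and let x < 2^w be such that some element of S is ≤ x. Let y be the maximum element of {s ∈ S : s ≤ x} (the predecessor of x in S). Let p < 2^m be such that S_p := {s ∈ S : s / 2^(w−m) = p} is nonempty, and let p_min and p_max be the minimum and maximum of S_p respectively. Then: (a) if x / 2^(w−m) = p, then either y ∈ S_p, or the set {s ∈ S : s < p_min} is nonempty and y is its maximum; (b) if x / 2^(w−m) ≠ p, then y ∈ S \ S_p or y = p_max. -/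
/-! The prefix map `s ↦ s / 2^(w-m)` is monotone, so an element with a strictly smaller prefix is
strictly smaller. If `x` has prefix `p` but its predecessor `y` does not, then `y` lies below the
whole block `S_p`, and every element of `S` below the block has a smaller prefix than `x`, hence is
at most `y`. If `x` does not have prefix `p` but `y` does, the whole block lies below `x`, so `y` is
its maximum. -/

namespace Finset

variable {α β : Type*} [LinearOrder α] [PartialOrder β] [DecidableEq β] {f : α → β}
  {S : Finset α} {p : β} {x y : α}

theorem key_lt_of_mem_of_lt_min'_filter (hS : (S.filter (f · = p)).Nonempty) (hf : Monotone f)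
    {s : α} (hs : s ∈ S) (hlt : s < (S.filter (f · = p)).min' hS) : f s < p := by
  obtain ⟨-, hb⟩ := mem_filter.mp (min'_mem _ hS)
  refine (hb ▸ hf hlt.le).lt_of_ne fun hsp => ?_
  exact hlt.not_ge (min'_le _ s (mem_filter.mpr ⟨hs, hsp⟩))

theorem pred_mem_filter_or_isGreatest_lt_min' (hyS : y ∈ S) (hyx : y ≤ x)
    (hymax : ∀ s ∈ S, s ≤ x → s ≤ y) (hf : Monotone f) (hxp : f x = p)
    (hS : (S.filter (f · = p)).Nonempty) :
    y ∈ S.filter (f · = p) ∨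
      (y ∈ S.filter (· < (S.filter (f · = p)).min' hS) ∧
        ∀ s ∈ S.filter (· < (S.filter (f · = p)).min' hS), s ≤ y) := by
  by_cases hyp : f y = p
  · exact .inl (mem_filter.mpr ⟨hyS, hyp⟩)
  obtain ⟨-, hminp⟩ := mem_filter.mp (min'_mem _ hS)
  have hy_key : f y < p := (hxp ▸ hf hyx).lt_of_ne hyp
  refine .inr ⟨mem_filter.mpr ⟨hyS, hf.reflect_lt (by rwa [hminp])⟩, fun s hs => ?_⟩
  obtain ⟨hsS, hslt⟩ := mem_filter.mp hs
  have hs_key : f s < f x := hxp ▸ key_lt_of_mem_of_lt_min'_filter hS hf hsS hslt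
  exact hymax s hsS (hf.reflect_lt hs_key).le

theorem pred_mem_sdiff_filter_or_eq_max' (hyS : y ∈ S) (hyx : y ≤ x)
    (hymax : ∀ s ∈ S, s ≤ x → s ≤ y) (hf : Monotone f) (hxp : f x ≠ p)
    (hS : (S.filter (f · = p)).Nonempty) :
    y ∈ S \ S.filter (f · = p) ∨ y = (S.filter (f · = p)).max' hS := by
  by_cases hyp : f y = p
  · obtain ⟨hmaxS, hmaxp⟩ := mem_filter.mp (max'_mem _ hS)
    have hp_lt : p < f x := (hyp ▸ hf hyx).lt_of_ne (Ne.symm hxp)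
    have hmax_key : f ((S.filter (f · = p)).max' hS) < f x := by rwa [hmaxp]
    have hmax_le : (S.filter (f · = p)).max' hS ≤ y :=
      hymax _ hmaxS (hf.reflect_lt hmax_key).le
    exact .inr (le_antisymm (le_max' _ y (mem_filter.mpr ⟨hyS, hyp⟩)) hmax_le)
  · exact .inl (mem_sdiff.mpr ⟨hyS, fun h => hyp (mem_filter.mp h).2⟩)

end Finset

theorem predecessor_preserved_general (w m p x : ℕ)
    (S : Finset ℕ)
    (y : ℕ) (hyS : y ∈ S) (hyx : y ≤ x) (hymax : ∀ s ∈ S, s ≤ x → s ≤ y)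
    (hSpne : (S.filter (fun s => s / 2 ^ (w - m) = p)).Nonempty)
    (pmin pmax : ℕ)
    (hpmin : pmin = (S.filter (fun s => s / 2 ^ (w - m) = p)).min' hSpne)
    (hpmax : pmax = (S.filter (fun s => s / 2 ^ (w - m) = p)).max' hSpne) :
    (x / 2 ^ (w - m) = p →
      (y ∈ S.filter (fun s => s / 2 ^ (w - m) = p) ∨
        (y ∈ S.filter (fun s => s < pmin) ∧
          ∀ s ∈ S.filter (fun s => s < pmin), s ≤ y))) ∧
    (x / 2 ^ (w - m) ≠ p →
      (y ∈ S \ S.filter (fun s => s / 2 ^ (w - m) = p) ∨ y = pmax)) := by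
  have hprefix : Monotone (· / 2 ^ (w - m)) := fun _ _ h => Nat.div_le_div_right h
  subst hpmin hpmax
  exact ⟨fun hxp => Finset.pred_mem_filter_or_isGreatest_lt_min' hyS hyx hymax hprefix hxp hSpne,
    fun hxp => Finset.pred_mem_sdiff_filter_or_eq_max' hyS hyx hymax hprefix hxp hSpne⟩

/-- **Predecessor preservation in the B-structure.** Let `y` be the predecessor of `x` in `S`
and let `S_p = {s ∈ S : s / 2^(w−m) = p}` be nonempty with minimum `pmin` and maximum `pmax`.
(a) If `x` has prefix `p` then either `y ∈ S_p`, or `{s ∈ S : s < pmin}` is nonempty and `y`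
is its maximum. (b) If `x` does not have prefix `p` then `y ∈ S \ S_p` or `y = pmax`. -/
theorem predecessor_preserved (w m p x : ℕ) (hm : m ≤ w) (hp : p < 2 ^ m)
    (S : Finset ℕ) (hSne : S.Nonempty) (hS : ∀ s ∈ S, s < 2 ^ w) (hx : x < 2 ^ w)
    (y : ℕ) (hyS : y ∈ S) (hyx : y ≤ x) (hymax : ∀ s ∈ S, s ≤ x → s ≤ y)
    (hSpne : (S.filter (fun s => s / 2 ^ (w - m) = p)).Nonempty)
    (pmin pmax : ℕ)
    (hpmin : pmin = (S.filter (fun s => s / 2 ^ (w - m) = p)).min' hSpne)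
    (hpmax : pmax = (S.filter (fun s => s / 2 ^ (w - m) = p)).max' hSpne) :
    (x / 2 ^ (w - m) = p →
      (y ∈ S.filter (fun s => s / 2 ^ (w - m) = p) ∨
        (y ∈ S.filter (fun s => s < pmin) ∧
          ∀ s ∈ S.filter (fun s => s < pmin), s ≤ y))) ∧
    (x / 2 ^ (w - m) ≠ p →
      (y ∈ S \ S.filter (fun s => s / 2 ^ (w - m) = p) ∨ y = pmax)) :=
  predecessor_preserved_general w m p x S y hyS hyx hymax hSpne pmin pmax hpmin hpmax
end

section
/- Let V be a finite type and let m₁, m₂ : V → V be two involutions without fixed points (m₁(m₁(v)) = v, m₂(m₂(v)) = v, m₁(v) ≠ v, and m₂(v) ≠ v for all v ∈ V). Then there exists a function f : V → Bool such that for every v ∈ V, f(m₁(v)) ≠ f(v) and f(m₂(v)) ≠ f(v). -/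
/-!
Put `σ = m₁`, `τ = m₂` and `p = σ τ`. Since `σ p σ⁻¹ = p⁻¹`, `σ` permutes the cycles of `p`.
Every word `σ p ^ k` is conjugate to `σ` or to `τ` (according to the parity of `k`), so it has no
fixed point: `σ v` never lies on the `p`-cycle of `v`. Hence `σ` pairs off the `p`-cycles, and
colouring one cycle of each pair `true` separates `v` from `σ v`; as `τ v = σ (p v)` lies on the
cycle of `σ v`, it separates `v` from `τ v` as well.
-/

open Equiv Function

theorem exists_bool_ne_of_involutive {α : Type*} {ι : α → α} (hι : Involutive ι)
    (hfix : ∀ a, ι a ≠ a) : ∃ f : α → Bool, ∀ a, f (ι a) ≠ f a := by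
  classical
  refine ⟨fun a => decide (s(a, ι a).out.1 = a), fun a => ?_⟩
  have hpair : s(ι a, ι (ι a)) = s(a, ι a) := by rw [hι a, Sym2.eq_swap]
  simp only [hpair]
  rcases Sym2.mem_iff.1 (Sym2.out_fst_mem s(a, ι a)) with h | h <;> simp [h, hfix a, (hfix a).symm]

theorem isConj_mul_zpow_add_self {G : Type*} [Group G] {x p : G} (h : x * p * x⁻¹ = p⁻¹)
    (a : ℤ) : IsConj x (x * p ^ (a + a)) := by
  have hsemi : SemiconjBy x (p ^ a) (p ^ (-a)) := by
    rw [zpow_neg, ← inv_zpow]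
    exact SemiconjBy.zpow_right (mul_inv_eq_iff_eq_mul.1 h) a
  refine isConj_iff.2 ⟨p ^ (-a), ?_⟩
  rw [← hsemi.eq, zpow_add]
  group

theorem isConj_mul_zpow_mul {G : Type*} [Group G] {x y : G} (hx : x * x = 1) (hy : y * y = 1)
    (k : ℤ) : IsConj x (x * (x * y) ^ k) ∨ IsConj y (x * (x * y) ^ k) := by
  have hx' : x⁻¹ = x := inv_eq_of_mul_eq_one_right hx
  have hy' : y⁻¹ = y := inv_eq_of_mul_eq_one_right hy
  obtain ⟨a, rfl | rfl⟩ := Int.even_or_odd' k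
  · left
    rw [two_mul]
    exact isConj_mul_zpow_add_self (by simp [hx', hy', ← mul_assoc, hx]) a
  · right
    rw [two_mul, add_comm, zpow_one_add, ← mul_assoc, ← mul_assoc, hx, one_mul]
    exact isConj_mul_zpow_add_self (by simp [hx', hy', mul_assoc, hy]) a

namespace Equiv.Perm

variable {α : Type*}

theorem apply_ne_self_of_isConj {σ π : Perm α} (h : IsConj σ π) (hσ : ∀ x, σ x ≠ x) (x : α) :
    π x ≠ x := by
  obtain ⟨c, rfl⟩ := isConj_iff.1 h
  intro hx
  apply hσ (c⁻¹ x)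
  simpa [eq_symm_apply] using hx

theorem SameCycle.apply_of_conj_eq_inv {σ p : Perm α} (h : σ * p * σ⁻¹ = p⁻¹) {v w : α}
    (hvw : SameCycle p v w) : SameCycle p (σ v) (σ w) := by
  simpa [h] using hvw.conj (g := σ)

theorem not_sameCycle_mul_apply {σ τ : Perm α} (hσ : σ * σ = 1) (hτ : τ * τ = 1)
    (hσfix : ∀ v, σ v ≠ v) (hτfix : ∀ v, τ v ≠ v) (v : α) : ¬ SameCycle (σ * τ) v (σ v) := by
  rintro ⟨k, hk⟩
  have hfix : (σ * (σ * τ) ^ k) v = v := by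
    rw [mul_apply, hk, ← mul_apply, hσ, one_apply]
  rcases isConj_mul_zpow_mul hσ hτ k with h | h
  · exact apply_ne_self_of_isConj h hσfix v hfix
  · exact apply_ne_self_of_isConj h hτfix v hfix

theorem exists_bool_ne_of_mul_self_eq_one {σ τ : Perm α} (hσ : σ * σ = 1) (hτ : τ * τ = 1)
    (hσfix : ∀ v, σ v ≠ v) (hτfix : ∀ v, τ v ≠ v) :
    ∃ f : α → Bool, ∀ v, f (σ v) ≠ f v ∧ f (τ v) ≠ f v := by
  have hσ' : σ⁻¹ = σ := inv_eq_of_mul_eq_one_right hσ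
  have hconj : σ * (σ * τ) * σ⁻¹ = (σ * τ)⁻¹ := by
    simp [hσ', inv_eq_of_mul_eq_one_right hτ, ← mul_assoc, hσ]
  let s := SameCycle.setoid (σ * τ)
  let σbar : Quotient s → Quotient s :=
    Quotient.map σ fun _ _ => SameCycle.apply_of_conj_eq_inv hconj
  have hinv : Involutive σbar := Quotient.ind fun v => congrArg _ (DFunLike.congr_fun hσ v)
  have hfix : ∀ q, σbar q ≠ q :=
    Quotient.ind fun v h => not_sameCycle_mul_apply hσ hτ hσfix hτfix v (Quotient.exact h).symm
  obtain ⟨g, hg⟩ := exists_bool_ne_of_involutive hinv hfix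
  refine ⟨fun v => g ⟦v⟧, fun v => ⟨hg ⟦v⟧, ?_⟩⟩
  have hτv : (⟦τ v⟧ : Quotient s) = σbar ⟦v⟧ := Quotient.sound <| by
    have hstep : (σ * τ) (τ v) = σ v := by rw [mul_apply, ← mul_apply τ, hτ, one_apply]
    exact hstep ▸ SameCycle.rfl.apply_right
  simpa [hτv] using hg ⟦v⟧

end Equiv.Perm

theorem two_involutions_two_coloring_general {V : Type*} (m₁ m₂ : V → V)
    (h₁ : ∀ v, m₁ (m₁ v) = v) (h₂ : ∀ v, m₂ (m₂ v) = v)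
    (hf₁ : ∀ v, m₁ v ≠ v) (hf₂ : ∀ v, m₂ v ≠ v) :
    ∃ f : V → Bool, ∀ v, f (m₁ v) ≠ f v ∧ f (m₂ v) ≠ f v :=
  Perm.exists_bool_ne_of_mul_self_eq_one (σ := Involutive.toPerm m₁ h₁)
    (τ := Involutive.toPerm m₂ h₂) (Equiv.ext h₁) (Equiv.ext h₂) hf₁ hf₂

/-- **2-coloring for two fixed-point-free involutions.** The union of the two perfect
matchings given by `m₁` and `m₂` decomposes into even cycles, hence admits a proper
2-coloring `f` separating every vertex from both of its mates. -/
theorem two_involutions_two_coloring {V : Type*} [Fintype V] (m₁ m₂ : V → V)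
    (h₁ : ∀ v, m₁ (m₁ v) = v) (h₂ : ∀ v, m₂ (m₂ v) = v)
    (hf₁ : ∀ v, m₁ v ≠ v) (hf₂ : ∀ v, m₂ v ≠ v) :
    ∃ f : V → Bool, ∀ v, f (m₁ v) ≠ f v ∧ f (m₂ v) ≠ f v :=
  two_involutions_two_coloring_general m₁ m₂ h₁ h₂ hf₁ hf₂
end

section
/- Let n ≥ 1 and let σ be a permutation of Fin(2n). Define the mate involution m : Fin(2n) → Fin(2n) by m(i) = i + n if i < n and m(i) = i − n otherwise. Then there exists a routing function f : Fin(2n) → Bool such that for every i ∈ Fin(2n): f(i) ≠ f(m(i)), and f(σ⁻¹(m(σ(i)))) ≠ f(i). -/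
/-- The mate of input `i` in a Benes network of size `2n`: `i + n` if `i < n`, else `i − n`. -/
def benesMate (n : ℕ) (i : Fin (2 * n)) : Fin (2 * n) :=
  if h : (i : ℕ) < n then ⟨(i : ℕ) + n, by have := i.isLt; omega⟩
  else ⟨(i : ℕ) - n, by have := i.isLt; omega⟩

/-!
Put `p = a * b` for the two fixed-point-free involutions `a` = mate and `b = σ⁻¹ a σ`.
Conjugation by `a` inverts `p`, so `a` permutes the cycles of `p`, and it never fixes one:
if `pᵏ x = a x` then the midpoint `p^(k/2) x` of that arc would be fixed by `a` (for `k` even)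
or by `b` (for `k` odd). Colour the cycles so that `a` swaps colours, and give every input the
colour of its `p`-cycle; then `f (a x) ≠ f x`, and `f (b x) = f (a (p x)) ≠ f (p x) = f x`.
-/

open Equiv Function

theorem Function.Involutive.exists_bool_apply_ne {β : Type*} {τ : β → β} (hτ : Involutive τ)
    (hfix : ∀ x, τ x ≠ x) : ∃ g : β → Bool, ∀ x, g (τ x) ≠ g x := by
  classical
  let : LinearOrder β := linearOrderOfSTO WellOrderingRel
  refine ⟨fun x => decide (x < τ x), fun x => ?_⟩
  rcases (hfix x).lt_or_gt with h | h <;> simp [hτ x, h, h.not_gt]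

namespace Equiv.Perm

variable {α : Type*} {a b : Perm α}

theorem apply_zpow_mul_apply (ha : Involutive a) (hb : Involutive b) (k : ℤ) (x : α) :
    a (((a * b) ^ k) x) = ((a * b) ^ (-k)) (a x) := by
  have ha_inv : a⁻¹ = a := inv_eq_of_mul_eq_one_right (Perm.ext ha)
  have hb_inv : b⁻¹ = b := inv_eq_of_mul_eq_one_right (Perm.ext hb)
  have hconj : a * (a * b) * a⁻¹ = (a * b)⁻¹ := by
    rw [mul_inv_rev, ha_inv, hb_inv, ← mul_assoc, show a * a = 1 from Perm.ext ha, one_mul]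
  have := congrArg (· (a x)) (conj_zpow (a := a) (b := a * b) (i := k))
  rw [hconj, inv_zpow'] at this
  simpa using this.symm

theorem SameCycle.apply_of_involutive (ha : Involutive a) (hb : Involutive b) {x y : α}
    (h : SameCycle (a * b) x y) : SameCycle (a * b) (a x) (a y) := by
  obtain ⟨k, rfl⟩ := h
  exact ⟨-k, (apply_zpow_mul_apply ha hb k x).symm⟩

theorem not_sameCycle_mul_apply_self (ha : Involutive a) (hb : Involutive b)
    (ha_fix : ∀ x, a x ≠ x) (hb_fix : ∀ x, b x ≠ x) (x : α) : ¬SameCycle (a * b) x (a x) := by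
  rintro ⟨k, hk⟩
  obtain ⟨j, rfl | rfl⟩ := Int.even_or_odd' k
  · refine ha_fix (((a * b) ^ j) x) ?_
    rw [apply_zpow_mul_apply ha hb, ← hk, ← mul_apply, ← zpow_add]
    congr; ring
  · refine hb_fix (((a * b) ^ j) x) ?_
    rw [← ha (b _), ← mul_apply a b, ← mul_apply (a * b), ← zpow_one_add,
      apply_zpow_mul_apply ha hb, ← hk, ← mul_apply, ← zpow_add]
    congr; ring

theorem exists_bool_apply_ne_of_involutive (ha : Involutive a) (hb : Involutive b)
    (ha_fix : ∀ x, a x ≠ x) (hb_fix : ∀ x, b x ≠ x) :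
    ∃ f : α → Bool, ∀ x, f (a x) ≠ f x ∧ f (b x) ≠ f x := by
  let s := SameCycle.setoid (a * b)
  let τ : Quotient s → Quotient s := Quotient.map a fun _ _ => SameCycle.apply_of_involutive ha hb
  have hτ : Involutive τ := by
    rintro ⟨x⟩
    exact congrArg (Quotient.mk s) (ha x)
  have hτ_fix : ∀ q, τ q ≠ q := by
    rintro ⟨x⟩ h
    exact not_sameCycle_mul_apply_self ha hb ha_fix hb_fix x (Quotient.exact h).symm
  obtain ⟨g, hg⟩ := hτ.exists_bool_apply_ne hτ_fix
  refine ⟨fun x => g (Quotient.mk s x), fun x => ⟨hg (Quotient.mk s x), ?_⟩⟩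
  have hb_eq : b x = a ((a * b) x) := (ha (b x)).symm
  have hp : Quotient.mk s ((a * b) x) = Quotient.mk s x :=
    Quotient.sound (sameCycle_apply_left.2 SameCycle.rfl)
  rw [hb_eq]
  exact (hg _).trans_eq (congrArg g hp)

end Equiv.Perm

theorem benesMate_val (n : ℕ) (i : Fin (2 * n)) :
    (benesMate n i : ℕ) = if (i : ℕ) < n then i + n else i - n := by
  unfold benesMate
  split_ifs <;> rfl

theorem benesMate_involutive (n : ℕ) : Involutive (benesMate n) := by
  intro i
  ext
  simp only [benesMate_val]
  split_ifs <;> omega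

theorem benesMate_ne_self {n : ℕ} (hn : 1 ≤ n) (i : Fin (2 * n)) : benesMate n i ≠ i := by
  rw [ne_eq, Fin.ext_iff, benesMate_val]
  split_ifs <;> omega

/-- **Correctness of the looping algorithm.** For every permutation `σ` of the inputs of a
Benes network of size `2n`, there is a routing `f` separating input mates and separating
the two inputs that `σ` sends to mate outputs. -/
theorem looping_algorithm (n : ℕ) (hn : 1 ≤ n) (σ : Equiv.Perm (Fin (2 * n))) :
    ∃ f : Fin (2 * n) → Bool, ∀ i : Fin (2 * n),
      f i ≠ f (benesMate n i) ∧ f (σ.symm (benesMate n (σ i))) ≠ f i := by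
  let a : Perm (Fin (2 * n)) := (benesMate_involutive n).toPerm
  let b : Perm (Fin (2 * n)) := σ⁻¹ * a * σ
  have ha_fix : ∀ i, a i ≠ i := benesMate_ne_self hn
  have hb : Involutive b := fun i => by simp [b, a, benesMate_involutive n _]
  have hb_fix : ∀ i, b i ≠ i := fun i h =>
    ha_fix (σ i) (by rwa [Perm.mul_apply, Perm.mul_apply, Perm.inv_eq_iff_eq] at h)
  obtain ⟨f, hf⟩ :=
    Perm.exists_bool_apply_ne_of_involutive (benesMate_involutive n) hb ha_fix hb_fix
  exact ⟨f, fun i => ⟨(hf i).1.symm, (hf i).2⟩⟩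
end
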